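/- arXiv:2004.08660 — 3 statements merged into one kernel-verified Lean document; each statement's English description precedes it below -/
import Mathlib

section
/- Let X ~ Γ_λ(α,β) be a degenerate gamma random variable with λ ∈ (0,1), 0 < α, β > 0, and n a positive integer with n+α < 1/λ. Then E[X^n] = (1/β^n) · C(n+α-1, n) / C_λ(1-λ(α+1), n), where C(x,n) = (x)_n/n! is the generalized binomial coefficient and C_λ(x,n) = (x)_{n,λ}/n! is the λ-binomial coefficient with (x)_{n,λ} = x(x-λ)···(x-(n-1)λ). -/
/-!
Integrating the derivative of `t ^ s (1 + λt) ^ (1 - 1/λ)` over `(0, ∞)` gives the recurrence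
`(1 - λ(s+1)) Γ_λ(s+1) = s Γ_λ(s)`, valid while `s + 1 < 1/λ`; iterating it `n` times gives
`Γ_λ(α+n) (1-λ(α+1))_{n,λ} = Γ_λ(α) α(α+1)⋯(α+n-1)`. The substitution `t = βx` turns the `n`-th
moment into `Γ_λ(α+n) / (β^n Γ_λ(α))`, and `α(α+1)⋯(α+n-1) = (n+α-1)_n`.
-/

open MeasureTheory Finset

/-- The degenerate gamma function `Γ_λ(s) = ∫_0^∞ (1+λt)^{-1/λ} t^{s-1} dt`. -/
noncomputable def degGamma (lam s : ℝ) : ℝ :=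
  ∫ t in Set.Ioi (0:ℝ), (1 + lam * t) ^ (-1/lam) * t ^ (s - 1)

/-- The probability density function of the degenerate gamma distribution `Γ_λ(α,β)`. -/
noncomputable def degGammaPdf (lam α β x : ℝ) : ℝ :=
  if 0 < x then (1 / degGamma lam α) * β * (1 + lam * β * x) ^ (-1/lam) * (β * x) ^ (α - 1)
  else 0

/-- The falling factorial `(x)_n = x(x-1)⋯(x-n+1)`. -/
noncomputable def fallingFactorial (x : ℝ) (n : ℕ) : ℝ :=
  ∏ j ∈ Finset.range n, (x - j)

/-- The generalized binomial coefficient `C(x,n) = (x)_n / n!`. -/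
noncomputable def genBinom (x : ℝ) (n : ℕ) : ℝ := fallingFactorial x n / n.factorial

/-- The degenerate falling factorial `(x)_{n,λ} = x(x-λ)⋯(x-(n-1)λ)`. -/
noncomputable def degFall (x lam : ℝ) (n : ℕ) : ℝ :=
  ∏ j ∈ Finset.range n, (x - j * lam)

/-- The λ-binomial coefficient `C_λ(x,n) = (x)_{n,λ} / n!`. -/
noncomputable def lamBinom (x lam : ℝ) (n : ℕ) : ℝ := degFall x lam n / n.factorial

open Set Filter Topology

lemma integrableOn_one_add_mul_rpow_mul_rpow {a b c : ℝ} (ha : 0 < a) (hc : c ≤ 0)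
    (hb : -1 < b) (hbc : b + c < -1) :
    IntegrableOn (fun t : ℝ => (1 + a * t) ^ c * t ^ b) (Ioi 0) := by
  have hmeas : ∀ s : Set ℝ,
      AEStronglyMeasurable (fun t : ℝ => (1 + a * t) ^ c * t ^ b) (volume.restrict s) :=
    fun s => by fun_prop
  have hnorm : ∀ t : ℝ, 0 < t → ‖(1 + a * t) ^ c * t ^ b‖ = (1 + a * t) ^ c * t ^ b := fun t ht =>
    Real.norm_of_nonneg (by positivity)
  have hsmall : IntegrableOn (fun t : ℝ => (1 + a * t) ^ c * t ^ b) (Ioc 0 1) := by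
    refine Integrable.mono' (g := fun t => t ^ b) ?_ (hmeas _) ?_
    · exact (intervalIntegrable_iff_integrableOn_Ioc_of_le zero_le_one).mp
        (intervalIntegral.intervalIntegrable_rpow' hb)
    filter_upwards [ae_restrict_mem measurableSet_Ioc] with t ht'
    obtain ⟨ht, -⟩ := ht'
    rw [hnorm t ht]
    exact mul_le_of_le_one_left (by positivity)
      (Real.rpow_le_one_of_one_le_of_nonpos (by nlinarith) hc)
  have hlarge : IntegrableOn (fun t : ℝ => (1 + a * t) ^ c * t ^ b) (Ioi 1) := by
    refine Integrable.mono' (g := fun t => a ^ c * t ^ (c + b)) ?_ (hmeas _) ?_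
    · exact (integrableOn_Ioi_rpow_of_lt (by linarith) one_pos).const_mul _
    filter_upwards [ae_restrict_mem measurableSet_Ioi] with t ht
    have ht0 : 0 < t := one_pos.trans ht
    rw [hnorm t ht0, Real.rpow_add ht0, ← mul_assoc, ← Real.mul_rpow ha.le ht0.le]
    exact mul_le_mul_of_nonneg_right
      (Real.rpow_le_rpow_of_nonpos (by positivity) (by linarith) hc) (by positivity)
  rw [← Ioc_union_Ioi_eq_Ioi zero_le_one]
  exact hsmall.union hlarge

lemma integrableOn_degGamma {lam s : ℝ} (hlam : 0 < lam) (hs : 0 < s) (hs' : s < 1 / lam) :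
    IntegrableOn (fun t : ℝ => (1 + lam * t) ^ (-1 / lam) * t ^ (s - 1)) (Ioi 0) :=
  integrableOn_one_add_mul_rpow_mul_rpow hlam (by rw [neg_div]; exact neg_nonpos.2 (by positivity))
    (by linarith) (by rw [neg_div]; linarith)

lemma degGamma_pos {lam s : ℝ} (hlam : 0 < lam) (hs : 0 < s) (hs' : s < 1 / lam) :
    0 < degGamma lam s := by
  have hpos : ∀ t ∈ Ioi (0 : ℝ), 0 < (1 + lam * t) ^ (-1 / lam) * t ^ (s - 1) := fun t ht => by
    have : 0 < t := ht
    positivity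
  rw [degGamma, setIntegral_pos_iff_support_of_nonneg_ae
    ((ae_restrict_iff' measurableSet_Ioi).2 (.of_forall fun t ht => (hpos t ht).le))
    (integrableOn_degGamma hlam hs hs'),
    inter_eq_right.2 fun t ht => Function.mem_support.2 (hpos t ht).ne', Real.volume_Ioi]
  exact ENNReal.zero_lt_top

lemma tendsto_rpow_mul_one_add_mul_rpow_atTop {a s c : ℝ} (ha : 0 < a) (hsc : s + c < 0) :
    Tendsto (fun t : ℝ => t ^ s * (1 + a * t) ^ c) atTop (𝓝 0) := by
  have hlim : Tendsto (fun t : ℝ => t ^ (s + c) * (t⁻¹ + a) ^ c) atTop (𝓝 (0 * a ^ c)) := by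
    refine Tendsto.mul ?_ ?_
    · simpa using tendsto_rpow_neg_atTop (y := -(s + c)) (by linarith)
    · refine (Real.continuousAt_rpow_const a c (.inl ha.ne')).tendsto.comp ?_
      simpa using tendsto_inv_atTop_zero.add_const a
  rw [zero_mul] at hlim
  refine hlim.congr' ?_
  filter_upwards [eventually_gt_atTop 0] with t ht
  rw [show 1 + a * t = t * (t⁻¹ + a) by field_simp, Real.mul_rpow ht.le (by positivity),
    Real.rpow_add ht, mul_assoc]

lemma degGamma_add_one {lam s : ℝ} (hlam : 0 < lam) (hs : 0 < s) (h : s + 1 < 1 / lam) :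
    (1 - lam * (s + 1)) * degGamma lam (s + 1) = s * degGamma lam s := by
  set c := 1 - 1 / lam
  set F : ℝ → ℝ := fun t => t ^ s * (1 + lam * t) ^ c
  set g : ℝ → ℝ → ℝ := fun s t => (1 + lam * t) ^ (-1 / lam) * t ^ (s - 1)
  have hderiv : ∀ t ∈ Ioi (0 : ℝ),
      HasDerivAt F (s * g s t + (lam * (s + 1) - 1) * g (s + 1) t) t := by
    intro t ht
    have ht : 0 < t := ht
    have hpos : 0 < 1 + lam * t := by positivity
    have hlin : HasDerivAt (fun t : ℝ => 1 + lam * t) lam t := by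
      simpa using ((hasDerivAt_id t).const_mul lam).const_add 1
    refine ((Real.hasDerivAt_rpow_const (.inl ht.ne')).mul
      ((Real.hasDerivAt_rpow_const (.inl hpos.ne')).comp t hlin)).congr_deriv ?_
    have e1 : (1 + lam * t) ^ c = (1 + lam * t) ^ (-1 / lam) * (1 + lam * t) := by
      rw [show c = -1 / lam + 1 by ring, Real.rpow_add hpos, Real.rpow_one]
    have e2 : c - 1 = -1 / lam := by ring
    have e3 : t ^ s = t ^ (s - 1) * t := by
      rw [← Real.rpow_add_one ht.ne', sub_add_cancel]
    simp only [Function.comp_apply, g, e1, e2, e3, add_sub_cancel_right]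
    simp only [c]
    field_simp
    ring
  have hcont : ContinuousWithinAt F (Ici 0) 0 := by
    refine ((Real.continuousAt_rpow_const 0 s (.inr hs.le)).mul ?_).continuousWithinAt
    exact (Real.continuousAt_rpow_const _ c (.inl (by norm_num))).comp (by fun_prop)
  have hint₀ := integrableOn_degGamma hlam hs (by linarith)
  have hint₁ := integrableOn_degGamma hlam (by linarith) h
  have hint : IntegrableOn (fun t => s * g s t + (lam * (s + 1) - 1) * g (s + 1) t) (Ioi 0) :=
    (hint₀.const_mul _).add (hint₁.const_mul _)
  have hlim : Tendsto F atTop (𝓝 0) :=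
    tendsto_rpow_mul_one_add_mul_rpow_atTop hlam (by simp only [c]; linarith)
  have hF0 : F 0 = 0 := by simp [F, Real.zero_rpow hs.ne']
  have key := integral_Ioi_of_hasDerivAt_of_tendsto hcont hderiv hint hlim
  rw [hF0, sub_zero, integral_add (hint₀.const_mul _) (hint₁.const_mul _), integral_const_mul,
    integral_const_mul] at key
  change s * degGamma lam s + (lam * (s + 1) - 1) * degGamma lam (s + 1) = 0 at key
  linear_combination -key

lemma degGamma_add_nat_mul_degFall {lam s : ℝ} (hlam : 0 < lam) (hs : 0 < s) :
    ∀ n : ℕ, s + n < 1 / lam →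
      degGamma lam (s + n) * degFall (1 - lam * (s + 1)) lam n =
        degGamma lam s * ∏ j ∈ range n, (s + j)
  | 0, _ => by simp [degFall]
  | n + 1, h => by
    push_cast at h
    have ih := degGamma_add_nat_mul_degFall hlam hs n (by linarith)
    have hrec := degGamma_add_one hlam (s := s + n) (by positivity) (by linarith)
    rw [degFall, prod_range_succ, ← degFall, prod_range_succ, Nat.cast_add_one, ← add_assoc]
    linear_combination degFall (1 - lam * (s + 1)) lam n * hrec + (s + n) * ih

lemma degFall_pos {lam s : ℝ} (hlam : 0 < lam) {n : ℕ} (h : s + n < 1 / lam) :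
    0 < degFall (1 - lam * (s + 1)) lam n := by
  refine prod_pos fun j hj => ?_
  have hj : (j : ℝ) + 1 ≤ n := by exact_mod_cast mem_range.mp hj
  have : lam * (s + n) < 1 := by rwa [mul_comm, ← lt_div_iff₀ hlam]
  nlinarith

lemma fallingFactorial_add_sub_one (x : ℝ) (n : ℕ) :
    fallingFactorial (n + x - 1) n = ∏ j ∈ range n, (x + j) := by
  rw [fallingFactorial, ← prod_range_reflect]
  refine prod_congr rfl fun j hj => ?_
  have hj : j < n := mem_range.mp hj
  rw [Nat.sub_sub, Nat.cast_sub (by omega)]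
  push_cast
  ring

lemma integral_pow_mul_degGammaPdf (lam α : ℝ) {β : ℝ} (hβ : 0 < β) (n : ℕ) :
    ∫ x : ℝ, x ^ n * degGammaPdf lam α β x = degGamma lam (α + n) / (β ^ n * degGamma lam α) := by
  set g : ℝ → ℝ := fun t => (1 + lam * t) ^ (-1 / lam) * t ^ (α + n - 1)
  calc ∫ x : ℝ, x ^ n * degGammaPdf lam α β x
      = ∫ x in Ioi 0, β / (β ^ n * degGamma lam α) * g (β * x) := by
        rw [← integral_indicator measurableSet_Ioi]
        refine integral_congr_ae (.of_forall fun x => ?_)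
        dsimp only
        by_cases hx : 0 < x
        · rw [indicator_of_mem (show x ∈ Set.Ioi (0 : ℝ) from hx), degGammaPdf, if_pos hx]
          have hβx : 0 < β * x := by positivity
          simp only [g]
          rw [show α + n - 1 = α - 1 + n by ring, Real.rpow_add hβx, Real.rpow_natCast, mul_pow,
            mul_assoc lam β x]
          field_simp
        · rw [indicator_of_notMem (show x ∉ Set.Ioi (0 : ℝ) from hx), degGammaPdf, if_neg hx,
            mul_zero]
    _ = β / (β ^ n * degGamma lam α) * (β⁻¹ * degGamma lam (α + n)) := by
        rw [integral_const_mul, integral_comp_mul_left_Ioi g 0 hβ, mul_zero, smul_eq_mul]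
        rfl
    _ = degGamma lam (α + n) / (β ^ n * degGamma lam α) := by
        field_simp

theorem degGamma_moment_binom_general (lam α β : ℝ) (hlam : lam ∈ Set.Ioo (0:ℝ) 1)
    (hα : 0 < α) (hβ : 0 < β) (n : ℕ) (hnα : n + α < 1 / lam) :
    ∫ x : ℝ, x ^ n * degGammaPdf lam α β x =
      (1 / β ^ n) * (genBinom (n + α - 1) n / lamBinom (1 - lam * (α + 1)) lam n) := by
  have hn : α + n < 1 / lam := by linarith
  have hΓ := degGamma_add_nat_mul_degFall hlam.1 hα n hn
  have hΓα := (degGamma_pos hlam.1 hα (by linarith)).ne'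
  have hD := (degFall_pos hlam.1 hn).ne'
  rw [integral_pow_mul_degGammaPdf lam α hβ, genBinom, lamBinom, fallingFactorial_add_sub_one,
    eq_div_of_mul_eq hD hΓ]
  field_simp

theorem degGamma_moment_binom (lam α β : ℝ) (hlam : lam ∈ Set.Ioo (0:ℝ) 1)
    (hα : 0 < α) (hβ : 0 < β) (n : ℕ) (hn : 1 ≤ n) (hnα : n + α < 1 / lam) :
    ∫ x : ℝ, x ^ n * degGammaPdf lam α β x =
      (1 / β ^ n) * (genBinom (n + α - 1) n / lamBinom (1 - lam * (α + 1)) lam n) :=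
  degGamma_moment_binom_general lam α β hlam hα hβ n hnα
end

section
/- Let X ~ Γ_λ(1,1) with λ ∈ (0,1), and let n be a positive integer with n+1 < 1/λ. Then (1)_{n,λ} · E[X^n] / n! = (1-λ) / ((1-nλ)(1-(n+1)λ)), where (1)_{n,λ} = ∏_{j=0}^{n-1}(1-jλ). -/
open MeasureTheory Finset

/-- The probability density function of the degenerate gamma distribution `Γ_λ(1,1)`,
namely `f(x) = (1-λ)(1+λx)^{-1/λ}` for `x > 0`. -/
noncomputable def degGammaPdf11 (lam x : ℝ) : ℝ :=
  if 0 < x then (1 - lam) * (1 + lam * x) ^ (-1/lam) else 0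

/-! Writing `M m = ∫₀^∞ x^m (1 + c x)^s dx`, integrating the derivative of `x^(m+1) (1 + c x)^(s+1)`
over `(0, ∞)` and splitting `(1 + c x)^(s+1) = (1 + c x)^s + c x (1 + c x)^s` gives the recursion
`(m + 1) M m = -c (m + 2 + s) M (m + 1)`, and `M 0 = -1 / (c (s + 1))`. Hence
`M m = m! / ∏_{k ≤ m} (-c (k + 1 + s))`; for `c = λ`, `s = -1/λ` the factors are `1 - (k + 1) λ`,
so `(1 - λ) M n` is the `n`-th moment and the product is `(1)_{n+2,λ}`. -/

open Set Filter Topology Real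

section OneAddMulRpow

variable {c s : ℝ}

lemma pow_mul_one_add_mul_rpow_le (hc : 0 < c) (hs : s ≤ 0) (p : ℕ) {x : ℝ} (hx : 0 < x) :
    x ^ p * (1 + c * x) ^ s ≤ c ^ s * x ^ ((p : ℝ) + s) := by
  calc x ^ p * (1 + c * x) ^ s ≤ x ^ p * (c * x) ^ s := by
        refine mul_le_mul_of_nonneg_left ?_ (by positivity)
        exact rpow_le_rpow_of_nonpos (by positivity) (by linarith) hs
    _ = c ^ s * x ^ ((p : ℝ) + s) := by
        rw [mul_rpow hc.le hx.le, rpow_add hx, rpow_natCast]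
        ring

lemma integrableOn_pow_mul_one_add_mul_rpow (hc : 0 < c) (p : ℕ) (hps : (p : ℝ) + s < -1) :
    IntegrableOn (fun x : ℝ => x ^ p * (1 + c * x) ^ s) (Set.Ioi 0) := by
  have hcont : ContinuousOn (fun x : ℝ => x ^ p * (1 + c * x) ^ s) (Set.Ici 0) := by
    refine (continuous_pow p).continuousOn.mul (ContinuousOn.rpow_const (by fun_prop) ?_)
    exact fun x (hx : 0 ≤ x) => Or.inl (by positivity)
  rw [← Ioc_union_Ioi_eq_Ioi zero_le_one]
  refine IntegrableOn.union ?_ ?_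
  · exact ((hcont.mono Icc_subset_Ici_self).integrableOn_Icc).mono_set Ioc_subset_Icc_self
  · have hdom : IntegrableOn (fun x : ℝ => c ^ s * x ^ ((p : ℝ) + s)) (Set.Ioi 1) :=
      (integrableOn_Ioi_rpow_of_lt hps one_pos).const_mul _
    have hcont' := hcont.mono fun x (hx : 1 < x) => show (0 : ℝ) ≤ x by linarith
    refine hdom.mono' (hcont'.aestronglyMeasurable measurableSet_Ioi) ?_
    filter_upwards [ae_restrict_mem measurableSet_Ioi] with x (hx : 1 < x)
    rw [norm_of_nonneg (by positivity)]
    exact pow_mul_one_add_mul_rpow_le hc (by linarith [(p.cast_nonneg : (0 : ℝ) ≤ p)]) p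
      (by linarith)

lemma tendsto_pow_mul_one_add_mul_rpow_atTop (hc : 0 < c) (p : ℕ) (hps : (p : ℝ) + s < 0) :
    Tendsto (fun x : ℝ => x ^ p * (1 + c * x) ^ s) atTop (𝓝 0) := by
  have hdom : Tendsto (fun x : ℝ => c ^ s * x ^ ((p : ℝ) + s)) atTop (𝓝 0) := by
    simpa using (tendsto_rpow_neg_atTop (y := -((p : ℝ) + s)) (by linarith)).const_mul (c ^ s)
  refine squeeze_zero' ?_ ?_ hdom
  · filter_upwards [eventually_gt_atTop 0] with x hx
    positivity
  · filter_upwards [eventually_gt_atTop 0] with x hx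
    exact pow_mul_one_add_mul_rpow_le hc (by linarith [(p.cast_nonneg : (0 : ℝ) ≤ p)]) p hx

lemma hasDerivAt_pow_mul_one_add_mul_rpow (m : ℕ) {x : ℝ} (hx : 0 < 1 + c * x) :
    HasDerivAt (fun x : ℝ => x ^ m * (1 + c * x) ^ (s + 1))
      (m * x ^ (m - 1) * (1 + c * x) ^ (s + 1) + c * (s + 1) * (x ^ m * (1 + c * x) ^ s)) x := by
  have hlin : HasDerivAt (fun x : ℝ => 1 + c * x) c x := by
    simpa using ((hasDerivAt_id x).const_mul c).const_add 1
  refine ((hasDerivAt_pow m x).mul (hlin.rpow_const (p := s + 1) (Or.inl hx.ne'))).congr_deriv ?_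
  rw [add_sub_cancel_right]
  ring

noncomputable def oneAddMulRpowMoment (c s : ℝ) (m : ℕ) : ℝ :=
  ∫ x in Set.Ioi 0, x ^ m * (1 + c * x) ^ s

lemma oneAddMulRpowMoment_zero (hc : 0 < c) (hs : s < -1) :
    oneAddMulRpowMoment c s 0 = -1 / (c * (s + 1)) := by
  have hderiv : ∀ x ∈ Set.Ici (0 : ℝ), HasDerivAt (fun x : ℝ => x ^ 0 * (1 + c * x) ^ (s + 1))
      (c * (s + 1) * (x ^ 0 * (1 + c * x) ^ s)) x := fun x (hx : 0 ≤ x) => by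
    simpa using hasDerivAt_pow_mul_one_add_mul_rpow (s := s) 0 (by positivity : 0 < 1 + c * x)
  have hftc := integral_Ioi_of_hasDerivAt_of_tendsto' hderiv
    ((integrableOn_pow_mul_one_add_mul_rpow hc 0 (by simpa using hs)).const_mul _)
    (tendsto_pow_mul_one_add_mul_rpow_atTop hc 0 (by simp; linarith))
  rw [integral_const_mul] at hftc
  have hne : c * (s + 1) ≠ 0 := mul_ne_zero hc.ne' (by linarith)
  rw [oneAddMulRpowMoment, eq_div_iff hne, mul_comm, hftc]
  simp

lemma oneAddMulRpowMoment_succ (hc : 0 < c) {m : ℕ} (hms : (m : ℝ) + 2 + s < 0) :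
    (m + 1) * oneAddMulRpowMoment c s m =
      -(c * (m + 2 + s)) * oneAddMulRpowMoment c s (m + 1) := by
  have hJ := integrableOn_pow_mul_one_add_mul_rpow hc m (s := s + 1) (by linarith)
  have hIsucc := integrableOn_pow_mul_one_add_mul_rpow hc (m + 1) (s := s) (by push_cast; linarith)
  have hI := integrableOn_pow_mul_one_add_mul_rpow hc m (s := s) (by linarith)
  have hderiv : ∀ x ∈ Set.Ici (0 : ℝ),
      HasDerivAt (fun x : ℝ => x ^ (m + 1) * (1 + c * x) ^ (s + 1))
      ((m + 1) * (x ^ m * (1 + c * x) ^ (s + 1)) + c * (s + 1) * (x ^ (m + 1) * (1 + c * x) ^ s))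
      x := fun x (hx : 0 ≤ x) => by
    convert hasDerivAt_pow_mul_one_add_mul_rpow (s := s) (m + 1) (by positivity : 0 < 1 + c * x)
      using 1
    push_cast
    ring
  have hftc := integral_Ioi_of_hasDerivAt_of_tendsto' hderiv
    ((hJ.const_mul _).add (hIsucc.const_mul _))
    (tendsto_pow_mul_one_add_mul_rpow_atTop hc (m + 1) (by push_cast; linarith))
  rw [integral_add (hJ.const_mul _) (hIsucc.const_mul _), integral_const_mul,
    integral_const_mul] at hftc
  have hsplit : ∫ x in Set.Ioi 0, x ^ m * (1 + c * x) ^ (s + 1) =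
      oneAddMulRpowMoment c s m + c * oneAddMulRpowMoment c s (m + 1) := by
    rw [oneAddMulRpowMoment, oneAddMulRpowMoment, ← integral_const_mul,
      ← integral_add hI (hIsucc.const_mul _)]
    refine setIntegral_congr_fun measurableSet_Ioi fun x (hx : 0 < x) => ?_
    rw [rpow_add (by positivity), rpow_one, pow_succ]
    ring
  rw [hsplit, ← oneAddMulRpowMoment, zero_pow m.succ_ne_zero, zero_mul, sub_zero] at hftc
  linear_combination hftc

lemma prod_mul_oneAddMulRpowMoment (hc : 0 < c) {m : ℕ} (hms : (m : ℝ) + 1 + s < 0) :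
    (∏ k ∈ range (m + 1), -(c * (k + 1 + s))) * oneAddMulRpowMoment c s m = m.factorial := by
  induction m with
  | zero =>
    have hs : s < -1 := by simp at hms; linarith
    have hs1 : s + 1 ≠ 0 := by linarith
    rw [oneAddMulRpowMoment_zero hc hs, zero_add, prod_range_one, Nat.factorial_zero,
      Nat.cast_zero, Nat.cast_one, zero_add]
    field_simp
    ring
  | succ m ih =>
    have hstep := oneAddMulRpowMoment_succ hc (s := s) (m := m) (by push_cast at hms; linarith)
    rw [prod_range_succ, Nat.factorial_succ]
    push_cast at hms ⊢
    linear_combination (m + 1 : ℝ) * ih (by linarith) -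
      (∏ k ∈ range (m + 1), -(c * (k + 1 + s))) * hstep

end OneAddMulRpow

lemma degFall_add_two (x lam : ℝ) (n : ℕ) :
    degFall x lam (n + 2) = degFall x lam n * ((x - n * lam) * (x - (n + 1) * lam)) := by
  simp only [degFall, prod_range_succ]
  push_cast
  ring

lemma degFall_one_succ (lam : ℝ) (m : ℕ) :
    degFall 1 lam (m + 1) = ∏ k ∈ range m, (1 - (k + 1) * lam) := by
  simp [degFall, prod_range_succ']

lemma degFall_one_mul_oneAddMulRpowMoment {lam : ℝ} (hlam : 0 < lam) {m : ℕ}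
    (hm : (m + 1 : ℝ) < 1 / lam) :
    degFall 1 lam (m + 2) * oneAddMulRpowMoment lam (-1 / lam) m = m.factorial := by
  have hms : (m : ℝ) + 1 + -1 / lam < 0 := by rw [neg_div]; linarith
  rw [degFall_one_succ, ← prod_mul_oneAddMulRpowMoment hlam hms]
  congr 1
  refine prod_congr rfl fun k _ => ?_
  field_simp
  ring

lemma integral_pow_mul_degGammaPdf11 (lam : ℝ) (n : ℕ) :
    ∫ x : ℝ, x ^ n * degGammaPdf11 lam x = (1 - lam) * oneAddMulRpowMoment lam (-1 / lam) n := by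
  have hpdf : (fun x : ℝ => x ^ n * degGammaPdf11 lam x) =
      (Set.Ioi 0).indicator fun x => (1 - lam) * (x ^ n * (1 + lam * x) ^ (-1 / lam)) := by
    ext x
    by_cases hx : 0 < x <;> simp [degGammaPdf11, hx]
    ring
  rw [hpdf, integral_indicator measurableSet_Ioi, integral_const_mul, oneAddMulRpowMoment]

theorem degGamma11_moment_formula_general (lam : ℝ) (hlam : lam ∈ Set.Ioo (0:ℝ) 1)
    (n : ℕ) (h : (n + 1 : ℝ) < 1 / lam) :
    degFall 1 lam n * (∫ x : ℝ, x ^ n * degGammaPdf11 lam x) / n.factorial =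
      (1 - lam) / ((1 - n * lam) * (1 - (n + 1) * lam)) := by
  obtain ⟨hlam0, -⟩ := hlam
  have hprod := degFall_one_mul_oneAddMulRpowMoment hlam0 h
  rw [degFall_add_two] at hprod
  have hnlam : (n + 1) * lam < 1 := (lt_div_iff₀ hlam0).mp h
  have h1 : 0 < 1 - n * lam := by nlinarith
  have h2 : 0 < 1 - (n + 1) * lam := by linarith
  rw [integral_pow_mul_degGammaPdf11, div_eq_div_iff (by positivity) (by positivity)]
  linear_combination (1 - lam) * hprod

theorem degGamma11_moment_formula (lam : ℝ) (hlam : lam ∈ Set.Ioo (0:ℝ) 1)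
    (n : ℕ) (hn : 1 ≤ n) (h : (n + 1 : ℝ) < 1 / lam) :
    degFall 1 lam n * (∫ x : ℝ, x ^ n * degGammaPdf11 lam x) / n.factorial =
      (1 - lam) / ((1 - n * lam) * (1 - (n + 1) * lam)) :=
  degGamma11_moment_formula_general lam hlam n h
end

section
/- Let X ~ Γ_λ(α,1) with λ ∈ (0,1) and suitable convergence. For each k ≥ 0, ∑_{n=0}^k S₁(k,n) C(n+α-1,n)/C_λ(1-(α+1)λ, n) = ∑_{n=0}^k ∑_{l=0}^n ∑_{m=0}^l S_{2,λ}(n,l) S₁(l,m) S_{1,λ}(k,n) C(m+α-1,m)/C_λ(1-(α+1)λ, m), where S₁ are (signed) Stirling numbers of the first kind, S_{1,λ} and S_{2,λ} are the degenerate Stirling numbers of the first and second kind, C(x,n)=(x)_n/n!, and C_λ(x,n)=(x)_{n,λ}/n!. -/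
open Finset

/-!
The moments `M m = C(m+α-1,m) / C_λ(1-(α+1)λ,m)` enter only through the linear functional
`Xᵐ ↦ M m` (the expectation `E[p(X)]`). Expanding `(x)_k` directly in powers of `x` and, alternatively,
through `(x)_k = ∑ S_{1,λ}(k,n) (x)_{n,λ}`, `(x)_{n,λ} = ∑ S_{2,λ}(n,l) (x)_l`,
`(x)_l = ∑ S₁(l,m) xᵐ`, gives two equal polynomials; applying the functional to both is the identity.
-/

open Polynomial

noncomputable def momentFunctional {R : Type*} [CommSemiring R] (M : ℕ → R) : R[X] →ₗ[R] R :=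
  lsum fun m => M m • LinearMap.id

lemma momentFunctional_C_mul_X_pow {R : Type*} [CommSemiring R] (M : ℕ → R) (a : R) (m : ℕ) :
    momentFunctional M (C a * X ^ m) = a * M m := by
  rw [C_mul_X_pow_eq_monomial, momentFunctional, lsum_apply, sum_monomial_index _ _ (by simp),
    LinearMap.smul_apply, LinearMap.id_apply, smul_eq_mul, mul_comm]

lemma fallingFactorial_eq_sum_stirling (lam : ℝ) (S1 S1lam S2lam : ℕ → ℕ → ℝ)
    (hS1 : ∀ (n : ℕ) (x : ℝ),
      fallingFactorial x n = ∑ m ∈ range (n + 1), S1 n m * x ^ m)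
    (hS1lam : ∀ (n : ℕ) (x : ℝ),
      fallingFactorial x n = ∑ l ∈ range (n + 1), S1lam n l * degFall x lam l)
    (hS2lam : ∀ (n : ℕ) (x : ℝ),
      degFall x lam n = ∑ l ∈ range (n + 1), S2lam n l * fallingFactorial x l)
    (k : ℕ) (x : ℝ) :
    fallingFactorial x k = ∑ n ∈ range (k + 1), ∑ l ∈ range (n + 1), ∑ m ∈ range (l + 1),
      S2lam n l * S1 l m * S1lam k n * x ^ m := by
  rw [hS1lam]
  refine sum_congr rfl fun n _ => ?_
  rw [hS2lam, mul_comm, sum_mul]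
  refine sum_congr rfl fun l _ => ?_
  rw [hS1, mul_sum, sum_mul]
  exact sum_congr rfl fun m _ => by ring

theorem stirling_moment_identity_general (lam α : ℝ)
    (S1 S1lam S2lam : ℕ → ℕ → ℝ)
    -- `S₁` : (signed) Stirling numbers of the first kind, `(x)_n = ∑_m S₁(n,m) xᵐ`
    (hS1 : ∀ (n : ℕ) (x : ℝ),
      fallingFactorial x n = ∑ m ∈ Finset.range (n + 1), S1 n m * x ^ m)
    -- `S_{1,λ}` : degenerate Stirling numbers of the first kind,
    -- `(x)_n = ∑_l S_{1,λ}(n,l) (x)_{l,λ}`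
    (hS1lam : ∀ (n : ℕ) (x : ℝ),
      fallingFactorial x n = ∑ l ∈ Finset.range (n + 1), S1lam n l * degFall x lam l)
    -- `S_{2,λ}` : degenerate Stirling numbers of the second kind,
    -- `(x)_{n,λ} = ∑_l S_{2,λ}(n,l) (x)_l`
    (hS2lam : ∀ (n : ℕ) (x : ℝ),
      degFall x lam n = ∑ l ∈ Finset.range (n + 1), S2lam n l * fallingFactorial x l)
    (k : ℕ) :
    ∑ n ∈ Finset.range (k + 1),
        S1 k n * (genBinom (n + α - 1) n / lamBinom (1 - (α + 1) * lam) lam n) =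
      ∑ n ∈ Finset.range (k + 1), ∑ l ∈ Finset.range (n + 1), ∑ m ∈ Finset.range (l + 1),
        S2lam n l * S1 l m * S1lam k n *
          (genBinom (m + α - 1) m / lamBinom (1 - (α + 1) * lam) lam m) := by
  set M : ℕ → ℝ := fun m => genBinom (m + α - 1) m / lamBinom (1 - (α + 1) * lam) lam m
  have hpoly : ∑ n ∈ range (k + 1), C (S1 k n) * X ^ n =
      ∑ n ∈ range (k + 1), ∑ l ∈ range (n + 1), ∑ m ∈ range (l + 1),
        C (S2lam n l * S1 l m * S1lam k n) * X ^ m := by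
    refine Polynomial.funext fun x => ?_
    simp only [eval_finsetSum, eval_mul, eval_C, eval_pow, eval_X]
    rw [← hS1, fallingFactorial_eq_sum_stirling lam S1 S1lam S2lam hS1 hS1lam hS2lam]
  simpa only [map_sum, momentFunctional_C_mul_X_pow] using congrArg (momentFunctional M) hpoly

theorem stirling_moment_identity (lam α : ℝ) (hlam : lam ∈ Set.Ioo (0:ℝ) 1) (hα : 0 < α)
    (S1 S1lam S2lam : ℕ → ℕ → ℝ)
    -- `S₁` : (signed) Stirling numbers of the first kind, `(x)_n = ∑_m S₁(n,m) xᵐ`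
    (hS1 : ∀ (n : ℕ) (x : ℝ),
      fallingFactorial x n = ∑ m ∈ Finset.range (n + 1), S1 n m * x ^ m)
    -- `S_{1,λ}` : degenerate Stirling numbers of the first kind,
    -- `(x)_n = ∑_l S_{1,λ}(n,l) (x)_{l,λ}`
    (hS1lam : ∀ (n : ℕ) (x : ℝ),
      fallingFactorial x n = ∑ l ∈ Finset.range (n + 1), S1lam n l * degFall x lam l)
    -- `S_{2,λ}` : degenerate Stirling numbers of the second kind,
    -- `(x)_{n,λ} = ∑_l S_{2,λ}(n,l) (x)_l`
    (hS2lam : ∀ (n : ℕ) (x : ℝ),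
      degFall x lam n = ∑ l ∈ Finset.range (n + 1), S2lam n l * fallingFactorial x l)
    (k : ℕ) :
    ∑ n ∈ Finset.range (k + 1),
        S1 k n * (genBinom (n + α - 1) n / lamBinom (1 - (α + 1) * lam) lam n) =
      ∑ n ∈ Finset.range (k + 1), ∑ l ∈ Finset.range (n + 1), ∑ m ∈ Finset.range (l + 1),
        S2lam n l * S1 l m * S1lam k n *
          (genBinom (m + α - 1) m / lamBinom (1 - (α + 1) * lam) lam m) :=
  stirling_moment_identity_general lam α S1 S1lam S2lam hS1 hS1lam hS2lam k
end
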